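/- The number of edge-marked bicolored binary trees with i black and j white nodes satisfies |B~_{ij}| = ((i+j-1)/(2i-j+1)) * |B•_{ij}|. -/

import Mathlib

/-- The number of nodes at even (`true`) or odd (`false`) depth of a plane binary tree. -/
def nodesAtParity : Bool → BinaryTree Unit → ℕ
  | _, BinaryTree.nil => 0
  | b, BinaryTree.node _ l r => (if b then 1 else 0) + nodesAtParity (!b) l + nodesAtParity (!b) r

namespace EMB

@[simp] lemma nodesAtParity_nil (b : Bool) : nodesAtParity b BinaryTree.nil = 0 := rfl

/-! ### Paths in trees -/

def follow : BinaryTree Unit → List Bool → Option (BinaryTree Unit)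
  | t, [] => some t
  | BinaryTree.nil, _ :: _ => none
  | BinaryTree.node _ l r, d :: p => follow (if d then r else l) p

@[simp] lemma follow_nil_cons (d : Bool) (p : List Bool) :
    follow BinaryTree.nil (d :: p) = none := rfl
@[simp] lemma follow_root (t : BinaryTree Unit) : follow t [] = some t := by cases t <;> rfl
@[simp] lemma follow_node_false (x : Unit) (l r : BinaryTree Unit) (p : List Bool) :
    follow (BinaryTree.node x l r) (false :: p) = follow l p := rfl
@[simp] lemma follow_node_true (x : Unit) (l r : BinaryTree Unit) (p : List Bool) :
    follow (BinaryTree.node x l r) (true :: p) = follow r p := rfl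

/-- Re-rooting: `g t p acc` walks down `t` along `p`, rebuilding the traversed
context upside-down around `acc`; the result is the part of `t` away from the
subtree at `p`, re-rooted at the parent of the node at `p`, with `acc` plugged
in at the slot corresponding to the old root. -/
def g : BinaryTree Unit → List Bool → BinaryTree Unit → BinaryTree Unit
  | _, [], acc => acc
  | BinaryTree.nil, _ :: _, _ => BinaryTree.nil
  | BinaryTree.node x l r, d :: p, acc =>
      if d then g r p (BinaryTree.node x l acc) else g l p (BinaryTree.node x acc r)

@[simp] lemma g_root (t acc : BinaryTree Unit) : g t [] acc = acc := by cases t <;> rfl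
@[simp] lemma g_node_false (x : Unit) (l r acc : BinaryTree Unit) (p : List Bool) :
    g (BinaryTree.node x l r) (false :: p) acc = g l p (BinaryTree.node x acc r) := rfl
@[simp] lemma g_node_true (x : Unit) (l r acc : BinaryTree Unit) (p : List Bool) :
    g (BinaryTree.node x l r) (true :: p) acc = g r p (BinaryTree.node x l acc) := rfl

/-- Replace the subtree at position `p` by `z`. -/
def replace : BinaryTree Unit → List Bool → BinaryTree Unit → BinaryTree Unit
  | _, [], z => z
  | BinaryTree.nil, _ :: _, _ => BinaryTree.nil
  | BinaryTree.node x l r, d :: p, z =>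
      if d then BinaryTree.node x l (replace r p z) else BinaryTree.node x (replace l p z) r

@[simp] lemma replace_root (t z : BinaryTree Unit) : replace t [] z = z := by cases t <;> rfl
@[simp] lemma replace_node_false (x : Unit) (l r z : BinaryTree Unit) (p : List Bool) :
    replace (BinaryTree.node x l r) (false :: p) z = BinaryTree.node x (replace l p z) r := rfl
@[simp] lemma replace_node_true (x : Unit) (l r z : BinaryTree Unit) (p : List Bool) :
    replace (BinaryTree.node x l r) (true :: p) z = BinaryTree.node x l (replace r p z) := rfl

def parityB (p : List Bool) : Bool := decide (p.length % 2 = 1)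

@[simp] lemma parityB_nil : parityB [] = false := rfl

lemma parityB_cons (d : Bool) (p : List Bool) : parityB (d :: p) = !parityB p := by
  simp only [parityB, List.length_cons]
  rcases Nat.mod_two_eq_zero_or_one p.length with h | h <;> simp [Nat.add_mod, h]

@[simp] lemma parityB_reverse (p : List Bool) : parityB p.reverse = parityB p := by
  simp [parityB]

lemma follow_append (t : BinaryTree Unit) (p q : List Bool) :
    follow t (p ++ q) = (follow t p).bind fun u => follow u q := by
  induction p generalizing t with
  | nil => simp
  | cons d p ih =>
      cases t with
      | nil => simp
      | node x l r => cases d <;> simp [ih]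

lemma follow_g_reverse {t : BinaryTree Unit} {p : List Bool} {s : BinaryTree Unit}
    (h : follow t p = some s) (Y : BinaryTree Unit) :
    follow (g t p Y) p.reverse = some Y := by
  induction p generalizing t Y with
  | nil => simp
  | cons d p ih =>
      cases t with
      | nil => simp at h
      | node x l r =>
          cases d with
          | false =>
              simp only [follow_node_false] at h
              simp only [g_node_false, List.reverse_cons]
              rw [follow_append, ih h]
              simp
          | true =>
              simp only [follow_node_true] at h
              simp only [g_node_true, List.reverse_cons]
              rw [follow_append, ih h]
              simp

lemma replace_self {t : BinaryTree Unit} {p : List Bool} {s : BinaryTree Unit}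
    (h : follow t p = some s) : replace t p s = t := by
  induction p generalizing t with
  | nil => simp at h; simp [h]
  | cons d p ih =>
      cases t with
      | nil => simp at h
      | node x l r => cases d <;> simp_all

lemma g_g_reverse_gen {t : BinaryTree Unit} {p : List Bool} {s : BinaryTree Unit}
    (h : follow t p = some s) (A : BinaryTree Unit) (q : List Bool) (Z : BinaryTree Unit) :
    g (g t p A) (p.reverse ++ q) Z = g A q (replace t p Z) := by
  induction p generalizing t A q with
  | nil => simp
  | cons d p ih =>
      cases t with
      | nil => simp at h
      | node x l r =>
          cases d with
          | false =>
              simp only [follow_node_false] at h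
              have := ih h (BinaryTree.node x A r) (false :: q)
              simp only [g_node_false, List.reverse_cons, List.append_assoc,
                List.cons_append, List.nil_append] at this ⊢
              rw [this]; simp
          | true =>
              simp only [follow_node_true] at h
              have := ih h (BinaryTree.node x l A) (true :: q)
              simp only [g_node_true, List.reverse_cons, List.append_assoc,
                List.cons_append, List.nil_append] at this ⊢
              rw [this]; simp

lemma g_g_reverse {t : BinaryTree Unit} {p : List Bool} {s : BinaryTree Unit}
    (h : follow t p = some s) (A Z : BinaryTree Unit) :
    g (g t p A) p.reverse Z = replace t p Z := by
  have := g_g_reverse_gen h A [] Z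
  simpa using this

lemma g_ne_nil {t : BinaryTree Unit} {p : List Bool} {s : BinaryTree Unit}
    (h : follow t p = some s) (hp : p ≠ []) (A : BinaryTree Unit) :
    g t p A ≠ BinaryTree.nil := by
  intro hg
  have h1 := follow_g_reverse h A
  rw [hg] at h1
  rcases hq : p.reverse with _ | ⟨d, q⟩
  · exact hp (by simpa using hq)
  · rw [hq] at h1; simp at h1

/-- The key node-count bookkeeping for the re-rooting operation. -/
lemma count_g {t : BinaryTree Unit} {p : List Bool} {s : BinaryTree Unit}
    (h : follow t p = some s) (Y : BinaryTree Unit) (b : Bool) :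
    nodesAtParity b (g t p Y) + nodesAtParity (!b) s
      = nodesAtParity (xor b (!parityB p)) t + nodesAtParity (xor b (parityB p)) Y := by
  induction p generalizing t Y b with
  | nil =>
      simp at h
      subst h
      simp [Nat.add_comm]
  | cons d p ih =>
      cases t with
      | nil => simp at h
      | node x l r =>
          rw [parityB_cons]
          cases d with
          | false =>
              simp only [follow_node_false] at h
              have H := ih h (BinaryTree.node x Y r) b
              simp only [g_node_false]
              rw [H]
              cases b <;> cases hp : parityB p <;>
                simp [nodesAtParity, hp] <;> omega
          | true =>
              simp only [follow_node_true] at h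
              have H := ih h (BinaryTree.node x l Y) b
              simp only [g_node_true]
              rw [H]
              cases b <;> cases hp : parityB p <;>
                simp [nodesAtParity, hp] <;> omega

/-! ### Counting nodes and leaves via finsets of paths -/

def nilsAtParity : Bool → BinaryTree Unit → ℕ
  | b, BinaryTree.nil => if b then 1 else 0
  | b, BinaryTree.node _ l r => nilsAtParity (!b) l + nilsAtParity (!b) r

lemma nils_nodes (t : BinaryTree Unit) (b : Bool) :
    nilsAtParity b t + nodesAtParity b t
      = 2 * nodesAtParity (!b) t + (if b then 1 else 0) := by
  induction t generalizing b with
  | nil => simp [nilsAtParity, nodesAtParity]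
  | node x l r ihl ihr =>
      have hl := ihl (!b)
      have hr := ihr (!b)
      cases b <;> simp [nilsAtParity, nodesAtParity] at * <;> omega

def nodePathsAt : Bool → BinaryTree Unit → Finset (List Bool)
  | _, BinaryTree.nil => ∅
  | b, BinaryTree.node _ l r =>
      (if b then {([] : List Bool)} else ∅)
        ∪ (nodePathsAt (!b) l).image (List.cons false)
        ∪ (nodePathsAt (!b) r).image (List.cons true)

def nilPathsAt : Bool → BinaryTree Unit → Finset (List Bool)
  | b, BinaryTree.nil => if b then {([] : List Bool)} else ∅
  | b, BinaryTree.node _ l r =>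
      (nilPathsAt (!b) l).image (List.cons false)
        ∪ (nilPathsAt (!b) r).image (List.cons true)

lemma mem_nodePathsAt {b : Bool} {t : BinaryTree Unit} {p : List Bool} :
    p ∈ nodePathsAt b t
      ↔ (∃ x l r, follow t p = some (BinaryTree.node x l r)) ∧ parityB p = !b := by
  induction t generalizing b p with
  | nil => cases p <;> simp [nodePathsAt]
  | node x l r ihl ihr =>
      cases p with
      | nil =>
          simp [nodePathsAt]
          cases b <;> simp
      | cons d p =>
          cases d <;>
            simp [nodePathsAt, ihl, ihr, parityB_cons] <;> cases b <;> simp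

lemma mem_nilPathsAt {b : Bool} {t : BinaryTree Unit} {p : List Bool} :
    p ∈ nilPathsAt b t ↔ follow t p = some BinaryTree.nil ∧ parityB p = !b := by
  induction t generalizing b p with
  | nil =>
      cases p with
      | nil => simp [nilPathsAt]; cases b <;> simp
      | cons d p => simp [nilPathsAt]; cases b <;> simp
  | node x l r ihl ihr =>
      cases p with
      | nil => simp [nilPathsAt]
      | cons d p =>
          cases d <;> simp [nilPathsAt, ihl, ihr, parityB_cons] <;> cases b <;> simp

lemma card_nodePathsAt (b : Bool) (t : BinaryTree Unit) :
    (nodePathsAt b t).card = nodesAtParity b t := by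
  induction t generalizing b with
  | nil => simp [nodePathsAt, nodesAtParity]
  | node x l r ihl ihr =>
      have d1 : Disjoint ((if b then {([] : List Bool)} else ∅)
          ∪ (nodePathsAt (!b) l).image (List.cons false))
          ((nodePathsAt (!b) r).image (List.cons true)) := by
        simp only [Finset.disjoint_left]
        intro p hp hp'
        simp only [Finset.mem_image] at hp'
        obtain ⟨q, -, rfl⟩ := hp'
        simp only [Finset.mem_union, Finset.mem_image] at hp
        rcases hp with hp | ⟨q', -, h⟩
        · cases b <;> simp_all
        · simp at h
      have d2 : Disjoint (if b then {([] : List Bool)} else ∅)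
          ((nodePathsAt (!b) l).image (List.cons false)) := by
        simp only [Finset.disjoint_left]
        intro p hp hp'
        simp only [Finset.mem_image] at hp'
        obtain ⟨q, -, rfl⟩ := hp'
        cases b <;> simp_all
      rw [nodePathsAt, Finset.card_union_of_disjoint d1, Finset.card_union_of_disjoint d2,
        Finset.card_image_of_injective _ (List.cons_injective),
        Finset.card_image_of_injective _ (List.cons_injective), ihl, ihr]
      cases b <;> simp [nodesAtParity]

lemma card_nilPathsAt (b : Bool) (t : BinaryTree Unit) :
    (nilPathsAt b t).card = nilsAtParity b t := by
  induction t generalizing b with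
  | nil => cases b <;> simp [nilPathsAt, nilsAtParity]
  | node x l r ihl ihr =>
      have d1 : Disjoint ((nilPathsAt (!b) l).image (List.cons false))
          ((nilPathsAt (!b) r).image (List.cons true)) := by
        simp only [Finset.disjoint_left]
        intro p hp hp'
        simp only [Finset.mem_image] at hp hp'
        obtain ⟨q, -, rfl⟩ := hp
        obtain ⟨q', -, h⟩ := hp'
        simp at h
      rw [nilPathsAt, Finset.card_union_of_disjoint d1,
        Finset.card_image_of_injective _ (List.cons_injective),
        Finset.card_image_of_injective _ (List.cons_injective), ihl, ihr]
      rfl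

lemma finite_size_le (n : ℕ) :
    {t : BinaryTree Unit | nodesAtParity true t + nodesAtParity false t ≤ n}.Finite := by
  induction n with
  | zero =>
      apply Set.Finite.subset (Set.finite_singleton BinaryTree.nil)
      rintro (_ | ⟨x, l, r⟩) ht
      · simp
      · simp [nodesAtParity] at ht
  | succ n ih =>
      apply Set.Finite.subset (Set.Finite.insert BinaryTree.nil
        (Set.Finite.image (fun p : BinaryTree Unit × BinaryTree Unit => BinaryTree.node () p.1 p.2)
          (Set.Finite.prod ih ih)))
      rintro (_ | ⟨x, l, r⟩) ht
      · simp
      · simp [nodesAtParity] at ht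
        refine Set.mem_insert_iff.2 (Or.inr ⟨(l, r), ⟨?_, ?_⟩, rfl⟩) <;>
          simp only [Set.mem_setOf_eq] <;> omega

/-! ### The marking finsets -/

def subAt (t : BinaryTree Unit) (p : List Bool) : BinaryTree Unit := (follow t p).getD BinaryTree.nil

/-- Inner-edge markers on a tree: nonempty paths to nodes. -/
def FE (t : BinaryTree Unit) : Finset (List Bool) :=
  (nodePathsAt true t ∪ nodePathsAt false t).erase []

/-- White-leaf markers on a cut pair: odd-depth nil slots of the black-rooted
component together with even-depth nil slots of the white-rooted component. -/
def FZ (B W : BinaryTree Unit) : Finset (Bool × List Bool) :=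
  (nilPathsAt false B).image (fun q => (true, q))
    ∪ (nilPathsAt true W).image (fun q => (false, q))

lemma mem_FE {t : BinaryTree Unit} {p : List Bool} :
    p ∈ FE t ↔ p ≠ [] ∧ ∃ x l r, follow t p = some (BinaryTree.node x l r) := by
  simp only [FE, Finset.mem_erase, Finset.mem_union, mem_nodePathsAt]
  constructor
  · rintro ⟨h1, h2 | h2⟩ <;> exact ⟨h1, h2.1⟩
  · rintro ⟨h1, h2⟩
    refine ⟨h1, ?_⟩
    cases hp : parityB p
    · exact Or.inl ⟨h2, by simp [hp]⟩
    · exact Or.inr ⟨h2, by simp [hp]⟩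

lemma mem_FZ {B W : BinaryTree Unit} {m : Bool × List Bool} :
    m ∈ FZ B W ↔ (if m.1 then m.2 ∈ nilPathsAt false B else m.2 ∈ nilPathsAt true W) := by
  obtain ⟨b, q⟩ := m
  cases b <;> simp [FZ, Prod.ext_iff, eq_comm]

lemma card_FE {t : BinaryTree Unit} (h1 : t ≠ BinaryTree.nil) :
    (FE t).card + 1 = nodesAtParity true t + nodesAtParity false t := by
  have hmem : ([] : List Bool) ∈ nodePathsAt true t ∪ nodePathsAt false t := by
    rcases t with _ | ⟨x, l, r⟩
    · exact absurd rfl h1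
    · exact Finset.mem_union_left _ (mem_nodePathsAt.2 ⟨⟨x, l, r, by simp⟩, by simp⟩)
  have hdisj : Disjoint (nodePathsAt true t) (nodePathsAt false t) := by
    simp only [Finset.disjoint_left]
    intro p hp hp'
    have := (mem_nodePathsAt.1 hp).2
    have := (mem_nodePathsAt.1 hp').2
    simp_all
  have hcard : (nodePathsAt true t ∪ nodePathsAt false t).card
      = nodesAtParity true t + nodesAtParity false t := by
    rw [Finset.card_union_of_disjoint hdisj, card_nodePathsAt, card_nodePathsAt]
  have hpos : 0 < (nodePathsAt true t ∪ nodePathsAt false t).card :=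
    Finset.card_pos.2 ⟨[], hmem⟩
  rw [FE, Finset.card_erase_of_mem hmem]
  omega

lemma card_FZ (B W : BinaryTree Unit) :
    (FZ B W).card + (nodesAtParity false B + nodesAtParity true W)
      = 2 * (nodesAtParity true B + nodesAtParity false W) + 1 := by
  have hdisj : Disjoint ((nilPathsAt false B).image (fun q => (true, q)))
      ((nilPathsAt true W).image (fun q => ((false : Bool), q))) := by
    simp only [Finset.disjoint_left]
    intro m hm hm'
    simp only [Finset.mem_image] at hm hm'
    obtain ⟨q, -, rfl⟩ := hm
    obtain ⟨q', -, h⟩ := hm'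
    simp [Prod.ext_iff] at h
  have hinj1 : Function.Injective (fun q : List Bool => ((true : Bool), q)) := by
    intro a b h; simpa [Prod.ext_iff] using h
  have hinj2 : Function.Injective (fun q : List Bool => ((false : Bool), q)) := by
    intro a b h; simpa [Prod.ext_iff] using h
  have hB := nils_nodes B false
  have hW := nils_nodes W true
  simp at hB hW
  rw [FZ, Finset.card_union_of_disjoint hdisj,
    Finset.card_image_of_injective _ hinj1, Finset.card_image_of_injective _ hinj2,
    card_nilPathsAt, card_nilPathsAt]
  omega

/-! ### The bijection between edge-markings and (cut pair, white leaf) data -/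

def Econd (i j : ℕ) (x : BinaryTree Unit × List Bool) : Prop :=
  (x.1 ≠ BinaryTree.nil ∧ nodesAtParity true x.1 = i ∧ nodesAtParity false x.1 = j)
    ∧ x.2 ∈ FE x.1

def Zcond (i j : ℕ) (z : (BinaryTree Unit × BinaryTree Unit) × Bool × List Bool) : Prop :=
  (z.1.1 ≠ BinaryTree.nil ∧ z.1.2 ≠ BinaryTree.nil ∧
      nodesAtParity true z.1.1 + nodesAtParity false z.1.2 = i ∧
      nodesAtParity false z.1.1 + nodesAtParity true z.1.2 = j)
    ∧ z.2 ∈ FZ z.1.1 z.1.2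

def fwd (x : BinaryTree Unit × List Bool) : (BinaryTree Unit × BinaryTree Unit) × Bool × List Bool :=
  if parityB x.2 then ((g x.1 x.2 BinaryTree.nil, subAt x.1 x.2), (true, x.2.reverse))
  else ((subAt x.1 x.2, g x.1 x.2 BinaryTree.nil), (false, x.2.reverse))

def bwd (z : (BinaryTree Unit × BinaryTree Unit) × Bool × List Bool) : BinaryTree Unit × List Bool :=
  if z.2.1 then (g z.1.1 z.2.2 z.1.2, z.2.2.reverse)
  else (g z.1.2 z.2.2 z.1.1, z.2.2.reverse)

lemma fwd_mem {i j : ℕ} {x : BinaryTree Unit × List Bool} (hx : Econd i j x) :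
    Zcond i j (fwd x) := by
  obtain ⟨⟨hne, hi, hj⟩, hpFE⟩ := hx
  obtain ⟨t, p⟩ := x
  obtain ⟨hpne, x0, l0, r0, hfol⟩ := mem_FE.1 hpFE
  dsimp only at hfol hi hj hne
  have hsub : subAt t p = BinaryTree.node x0 l0 r0 := by simp [subAt, hfol]
  have hc1 := count_g hfol BinaryTree.nil true
  have hc2 := count_g hfol BinaryTree.nil false
  cases hπ : parityB p with
  | true =>
      rw [hπ] at hc1 hc2
      simp only [Bool.not_true, Bool.xor_false, Bool.xor_true, Bool.not_false,
        nodesAtParity_nil] at hc1 hc2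
      have hfwd : fwd (t, p)
          = ((g t p BinaryTree.nil, BinaryTree.node x0 l0 r0), (true, p.reverse)) := by
        simp [fwd, hπ, hsub]
      rw [hfwd]
      refine ⟨⟨g_ne_nil hfol hpne _, by simp, by dsimp only; omega, by dsimp only; omega⟩, ?_⟩
      rw [mem_FZ]
      simp only [if_true]
      exact mem_nilPathsAt.2 ⟨follow_g_reverse hfol _, by simp [hπ]⟩
  | false =>
      rw [hπ] at hc1 hc2
      simp only [Bool.not_true, Bool.xor_false, Bool.xor_true, Bool.not_false,
        nodesAtParity_nil] at hc1 hc2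
      have hfwd : fwd (t, p)
          = ((BinaryTree.node x0 l0 r0, g t p BinaryTree.nil), (false, p.reverse)) := by
        simp [fwd, hπ, hsub]
      rw [hfwd]
      refine ⟨⟨by simp, g_ne_nil hfol hpne _, by dsimp only; omega, by dsimp only; omega⟩, ?_⟩
      rw [mem_FZ]
      simp only [if_false]
      exact mem_nilPathsAt.2 ⟨follow_g_reverse hfol _, by simp [hπ]⟩

lemma bwd_mem {i j : ℕ} {z : (BinaryTree Unit × BinaryTree Unit) × Bool × List Bool}
    (hz : Zcond i j z) : Econd i j (bwd z) := by
  obtain ⟨⟨hB, hW, hi, hj⟩, hm⟩ := hz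
  obtain ⟨⟨B, W⟩, m, q⟩ := z
  dsimp only at hm hi hj hB hW
  rw [mem_FZ] at hm
  cases m with
  | true =>
      simp only [if_true] at hm
      obtain ⟨hfol, hq⟩ := mem_nilPathsAt.1 hm
      simp only [Bool.not_false] at hq
      have hqne : q ≠ [] := by
        intro h; rw [h] at hq; simp at hq
      have hc1 := count_g hfol W true
      have hc2 := count_g hfol W false
      rw [hq] at hc1 hc2
      simp only [Bool.not_true, Bool.xor_false, Bool.xor_true, Bool.not_false,
        nodesAtParity_nil] at hc1 hc2
      have hbwd : bwd ((B, W), (true, q)) = (g B q W, q.reverse) := rfl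
      rw [hbwd]
      refine ⟨⟨g_ne_nil hfol hqne _, by dsimp only; omega, by dsimp only; omega⟩, ?_⟩
      rw [mem_FE]
      refine ⟨by simp [hqne], ?_⟩
      rcases W with _ | ⟨xw, lw, rw'⟩
      · exact absurd rfl hW
      · exact ⟨xw, lw, rw', follow_g_reverse hfol _⟩
  | false =>
      simp only [if_false] at hm
      obtain ⟨hfol, hq⟩ := mem_nilPathsAt.1 hm
      simp only [Bool.not_true] at hq
      have hqne : q ≠ [] := by
        intro h
        rw [h] at hfol
        simp at hfol
        exact hW hfol
      have hc1 := count_g hfol B true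
      have hc2 := count_g hfol B false
      rw [hq] at hc1 hc2
      simp only [Bool.not_true, Bool.xor_false, Bool.xor_true, Bool.not_false,
        nodesAtParity_nil] at hc1 hc2
      have hbwd : bwd ((B, W), (false, q)) = (g W q B, q.reverse) := rfl
      rw [hbwd]
      refine ⟨⟨g_ne_nil hfol hqne _, by dsimp only; omega, by dsimp only; omega⟩, ?_⟩
      rw [mem_FE]
      refine ⟨by simp [hqne], ?_⟩
      rcases B with _ | ⟨xb, lb, rb⟩
      · exact absurd rfl hB
      · exact ⟨xb, lb, rb, follow_g_reverse hfol _⟩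

lemma bwd_fwd {i j : ℕ} {x : BinaryTree Unit × List Bool} (hx : Econd i j x) :
    bwd (fwd x) = x := by
  obtain ⟨⟨hne, hi, hj⟩, hpFE⟩ := hx
  obtain ⟨t, p⟩ := x
  obtain ⟨hpne, x0, l0, r0, hfol⟩ := mem_FE.1 hpFE
  dsimp only at hfol
  have hsub : subAt t p = BinaryTree.node x0 l0 r0 := by simp [subAt, hfol]
  have key : g (g t p BinaryTree.nil) p.reverse (subAt t p) = t := by
    rw [hsub, g_g_reverse hfol, replace_self hfol]
  cases hπ : parityB p with
  | true => simp [fwd, bwd, hπ, key]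
  | false => simp [fwd, bwd, hπ, key]

lemma fwd_bwd {i j : ℕ} {z : (BinaryTree Unit × BinaryTree Unit) × Bool × List Bool}
    (hz : Zcond i j z) : fwd (bwd z) = z := by
  obtain ⟨⟨hB, hW, hi, hj⟩, hm⟩ := hz
  obtain ⟨⟨B, W⟩, m, q⟩ := z
  dsimp only at hm hB hW
  rw [mem_FZ] at hm
  cases m with
  | true =>
      simp only [if_true] at hm
      obtain ⟨hfol, hq⟩ := mem_nilPathsAt.1 hm
      simp only [Bool.not_false] at hq
      have hπ : parityB q.reverse = true := by simp [hq]
      have h1 : subAt (g B q W) q.reverse = W := by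
        simp [subAt, follow_g_reverse hfol]
      have h2 : g (g B q W) q.reverse BinaryTree.nil = B := by
        rw [g_g_reverse hfol, replace_self hfol]
      simp [bwd, fwd, hπ, h1, h2]
  | false =>
      simp only [if_false] at hm
      obtain ⟨hfol, hq⟩ := mem_nilPathsAt.1 hm
      simp only [Bool.not_true] at hq
      have hπ : parityB q.reverse = false := by simp [hq]
      have h1 : subAt (g W q B) q.reverse = B := by
        simp [subAt, follow_g_reverse hfol]
      have h2 : g (g W q B) q.reverse BinaryTree.nil = W := by
        rw [g_g_reverse hfol, replace_self hfol]
      simp [bwd, fwd, hπ, h1, h2]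

def mainEquiv (i j : ℕ) :
    {x : BinaryTree Unit × List Bool // Econd i j x}
      ≃ {z : (BinaryTree Unit × BinaryTree Unit) × Bool × List Bool // Zcond i j z} where
  toFun x := ⟨fwd x.1, fwd_mem x.2⟩
  invFun z := ⟨bwd z.1, bwd_mem z.2⟩
  left_inv x := Subtype.ext (bwd_fwd x.2)
  right_inv z := Subtype.ext (fwd_bwd z.2)

end EMB

open EMB in
/-- The number of edge-marked bicolored binary trees with `i` black and `j` white
nodes satisfies `|B~_{ij}| = ((i+j-1)/(2i-j+1)) |B•_{ij}|`, stated in cross-multiplied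
form. Cutting the marked inner edge turns an edge-marked tree into an ordered pair of
a (nonempty) black-rooted tree and a (nonempty) white-rooted tree, which is how
edge-marked trees are counted here; `|B•_{ij}|` counts black-rooted trees. -/
theorem edge_marked_bicolored_binary_trees_count (i j : ℕ) :
    (Nat.card {p : BinaryTree Unit × BinaryTree Unit //
        p.1 ≠ BinaryTree.nil ∧ p.2 ≠ BinaryTree.nil ∧
        nodesAtParity true p.1 + nodesAtParity false p.2 = i ∧
        nodesAtParity false p.1 + nodesAtParity true p.2 = j} : ℚ)
      * (2 * (i : ℚ) - j + 1)
    = ((i : ℚ) + j - 1)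
      * Nat.card {t : BinaryTree Unit // t ≠ BinaryTree.nil ∧
          nodesAtParity true t = i ∧ nodesAtParity false t = j} := by
  classical
  -- the finite ambient set of trees
  haveI hS : Finite {u : BinaryTree Unit //
      u ∈ {t : BinaryTree Unit | nodesAtParity true t + nodesAtParity false t ≤ i + j}} :=
    (finite_size_le (i + j)).to_subtype
  haveI finTA : Finite {t : BinaryTree Unit // t ≠ BinaryTree.nil ∧
      nodesAtParity true t = i ∧ nodesAtParity false t = j} := by
    apply Finite.of_injective (β := {u : BinaryTree Unit //
      u ∈ {t : BinaryTree Unit | nodesAtParity true t + nodesAtParity false t ≤ i + j}})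
      (fun t => ⟨t.1, by
        obtain ⟨h1, h2, h3⟩ := t.2
        simp only [Set.mem_setOf_eq]
        omega⟩)
    intro a b hab
    simp only [Subtype.mk.injEq] at hab
    exact Subtype.ext hab
  haveI finTP : Finite {p : BinaryTree Unit × BinaryTree Unit //
      p.1 ≠ BinaryTree.nil ∧ p.2 ≠ BinaryTree.nil ∧
      nodesAtParity true p.1 + nodesAtParity false p.2 = i ∧
      nodesAtParity false p.1 + nodesAtParity true p.2 = j} := by
    apply Finite.of_injective (β := ({u : BinaryTree Unit //
        u ∈ {t : BinaryTree Unit | nodesAtParity true t + nodesAtParity false t ≤ i + j}} ×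
        {u : BinaryTree Unit //
        u ∈ {t : BinaryTree Unit | nodesAtParity true t + nodesAtParity false t ≤ i + j}}))
      (fun q => (⟨q.1.1, by
          obtain ⟨h1, h2, h3, h4⟩ := q.2
          simp only [Set.mem_setOf_eq]
          omega⟩, ⟨q.1.2, by
          obtain ⟨h1, h2, h3, h4⟩ := q.2
          simp only [Set.mem_setOf_eq]
          omega⟩))
    intro a b hab
    simp only [Prod.ext_iff, Subtype.mk.injEq] at hab
    exact Subtype.ext (Prod.ext hab.1 hab.2)
  haveI fintTA := Fintype.ofFinite {t : BinaryTree Unit // t ≠ BinaryTree.nil ∧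
      nodesAtParity true t = i ∧ nodesAtParity false t = j}
  haveI fintTP := Fintype.ofFinite {p : BinaryTree Unit × BinaryTree Unit //
      p.1 ≠ BinaryTree.nil ∧ p.2 ≠ BinaryTree.nil ∧
      nodesAtParity true p.1 + nodesAtParity false p.2 = i ∧
      nodesAtParity false p.1 + nodesAtParity true p.2 = j}
  -- sigma decompositions
  let eqE : {x : BinaryTree Unit × List Bool // Econd i j x}
      ≃ (Σ t : {t : BinaryTree Unit // t ≠ BinaryTree.nil ∧
          nodesAtParity true t = i ∧ nodesAtParity false t = j}, {p // p ∈ FE t.1}) :=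
    { toFun := fun x => ⟨⟨x.1.1, x.2.1⟩, ⟨x.1.2, x.2.2⟩⟩
      invFun := fun y => ⟨(y.1.1, y.2.1), y.1.2, y.2.2⟩
      left_inv := fun x => rfl
      right_inv := fun y => rfl }
  let eqZ : {z : (BinaryTree Unit × BinaryTree Unit) × Bool × List Bool // Zcond i j z}
      ≃ (Σ q : {p : BinaryTree Unit × BinaryTree Unit //
          p.1 ≠ BinaryTree.nil ∧ p.2 ≠ BinaryTree.nil ∧
          nodesAtParity true p.1 + nodesAtParity false p.2 = i ∧
          nodesAtParity false p.1 + nodesAtParity true p.2 = j},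
          {m // m ∈ FZ q.1.1 q.1.2}) :=
    { toFun := fun z => ⟨⟨z.1.1, z.2.1⟩, ⟨z.1.2, z.2.2⟩⟩
      invFun := fun y => ⟨(y.1.1, y.2.1), y.1.2, y.2.2⟩
      left_inv := fun z => rfl
      right_inv := fun y => rfl }
  have hE : Nat.card {x : BinaryTree Unit × List Bool // Econd i j x}
      = ∑ t : {t : BinaryTree Unit // t ≠ BinaryTree.nil ∧
          nodesAtParity true t = i ∧ nodesAtParity false t = j}, (FE t.1).card := by
    rw [Nat.card_congr eqE, Nat.card_eq_fintype_card, Fintype.card_sigma]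
    simp [Fintype.card_coe]
  have hZ : Nat.card {z : (BinaryTree Unit × BinaryTree Unit) × Bool × List Bool // Zcond i j z}
      = ∑ q : {p : BinaryTree Unit × BinaryTree Unit //
          p.1 ≠ BinaryTree.nil ∧ p.2 ≠ BinaryTree.nil ∧
          nodesAtParity true p.1 + nodesAtParity false p.2 = i ∧
          nodesAtParity false p.1 + nodesAtParity true p.2 = j}, (FZ q.1.1 q.1.2).card := by
    rw [Nat.card_congr eqZ, Nat.card_eq_fintype_card, Fintype.card_sigma]
    simp [Fintype.card_coe]
  -- ℕ identities
  have hEA : Nat.card {x : BinaryTree Unit × List Bool // Econd i j x}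
      + Nat.card {t : BinaryTree Unit // t ≠ BinaryTree.nil ∧
          nodesAtParity true t = i ∧ nodesAtParity false t = j}
      = Nat.card {t : BinaryTree Unit // t ≠ BinaryTree.nil ∧
          nodesAtParity true t = i ∧ nodesAtParity false t = j} * (i + j) := by
    have key : ∀ t : {t : BinaryTree Unit // t ≠ BinaryTree.nil ∧
        nodesAtParity true t = i ∧ nodesAtParity false t = j},
        (FE t.1).card + 1 = i + j := by
      intro t
      have h := card_FE t.2.1
      rw [t.2.2.1, t.2.2.2] at h
      exact h
    calc Nat.card {x : BinaryTree Unit × List Bool // Econd i j x}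
        + Nat.card {t : BinaryTree Unit // t ≠ BinaryTree.nil ∧
            nodesAtParity true t = i ∧ nodesAtParity false t = j}
        = (∑ t : {t : BinaryTree Unit // t ≠ BinaryTree.nil ∧
            nodesAtParity true t = i ∧ nodesAtParity false t = j}, (FE t.1).card)
          + ∑ _t : {t : BinaryTree Unit // t ≠ BinaryTree.nil ∧
            nodesAtParity true t = i ∧ nodesAtParity false t = j}, 1 := by
          rw [hE, Nat.card_eq_fintype_card]
          simp
      _ = ∑ t : {t : BinaryTree Unit // t ≠ BinaryTree.nil ∧
            nodesAtParity true t = i ∧ nodesAtParity false t = j},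
            ((FE t.1).card + 1) := by rw [Finset.sum_add_distrib]
      _ = ∑ _t : {t : BinaryTree Unit // t ≠ BinaryTree.nil ∧
            nodesAtParity true t = i ∧ nodesAtParity false t = j}, (i + j) :=
          Finset.sum_congr rfl fun t _ => key t
      _ = Nat.card {t : BinaryTree Unit // t ≠ BinaryTree.nil ∧
            nodesAtParity true t = i ∧ nodesAtParity false t = j} * (i + j) := by
          rw [Finset.sum_const, Nat.card_eq_fintype_card]
          simp [mul_comm]
  have hZP : Nat.card {z : (BinaryTree Unit × BinaryTree Unit) × Bool × List Bool // Zcond i j z}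
      + Nat.card {p : BinaryTree Unit × BinaryTree Unit //
          p.1 ≠ BinaryTree.nil ∧ p.2 ≠ BinaryTree.nil ∧
          nodesAtParity true p.1 + nodesAtParity false p.2 = i ∧
          nodesAtParity false p.1 + nodesAtParity true p.2 = j} * j
      = Nat.card {p : BinaryTree Unit × BinaryTree Unit //
          p.1 ≠ BinaryTree.nil ∧ p.2 ≠ BinaryTree.nil ∧
          nodesAtParity true p.1 + nodesAtParity false p.2 = i ∧
          nodesAtParity false p.1 + nodesAtParity true p.2 = j} * (2 * i + 1) := by
    have key : ∀ q : {p : BinaryTree Unit × BinaryTree Unit //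
        p.1 ≠ BinaryTree.nil ∧ p.2 ≠ BinaryTree.nil ∧
        nodesAtParity true p.1 + nodesAtParity false p.2 = i ∧
        nodesAtParity false p.1 + nodesAtParity true p.2 = j},
        (FZ q.1.1 q.1.2).card + j = 2 * i + 1 := by
      intro q
      have h := card_FZ q.1.1 q.1.2
      rw [q.2.2.2.1, q.2.2.2.2] at h
      omega
    calc Nat.card {z : (BinaryTree Unit × BinaryTree Unit) × Bool × List Bool // Zcond i j z}
        + Nat.card {p : BinaryTree Unit × BinaryTree Unit //
          p.1 ≠ BinaryTree.nil ∧ p.2 ≠ BinaryTree.nil ∧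
          nodesAtParity true p.1 + nodesAtParity false p.2 = i ∧
          nodesAtParity false p.1 + nodesAtParity true p.2 = j} * j
        = (∑ q : {p : BinaryTree Unit × BinaryTree Unit //
          p.1 ≠ BinaryTree.nil ∧ p.2 ≠ BinaryTree.nil ∧
          nodesAtParity true p.1 + nodesAtParity false p.2 = i ∧
          nodesAtParity false p.1 + nodesAtParity true p.2 = j}, (FZ q.1.1 q.1.2).card)
          + ∑ _q : {p : BinaryTree Unit × BinaryTree Unit //
          p.1 ≠ BinaryTree.nil ∧ p.2 ≠ BinaryTree.nil ∧
          nodesAtParity true p.1 + nodesAtParity false p.2 = i ∧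
          nodesAtParity false p.1 + nodesAtParity true p.2 = j}, j := by
          rw [hZ, Nat.card_eq_fintype_card]
          simp [Finset.sum_const, mul_comm]
      _ = ∑ q : {p : BinaryTree Unit × BinaryTree Unit //
          p.1 ≠ BinaryTree.nil ∧ p.2 ≠ BinaryTree.nil ∧
          nodesAtParity true p.1 + nodesAtParity false p.2 = i ∧
          nodesAtParity false p.1 + nodesAtParity true p.2 = j},
            ((FZ q.1.1 q.1.2).card + j) := by rw [Finset.sum_add_distrib]
      _ = ∑ _q : {p : BinaryTree Unit × BinaryTree Unit //
          p.1 ≠ BinaryTree.nil ∧ p.2 ≠ BinaryTree.nil ∧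
          nodesAtParity true p.1 + nodesAtParity false p.2 = i ∧
          nodesAtParity false p.1 + nodesAtParity true p.2 = j}, (2 * i + 1) :=
          Finset.sum_congr rfl fun q _ => key q
      _ = Nat.card {p : BinaryTree Unit × BinaryTree Unit //
          p.1 ≠ BinaryTree.nil ∧ p.2 ≠ BinaryTree.nil ∧
          nodesAtParity true p.1 + nodesAtParity false p.2 = i ∧
          nodesAtParity false p.1 + nodesAtParity true p.2 = j} * (2 * i + 1) := by
          rw [Finset.sum_const, Nat.card_eq_fintype_card]
          simp [mul_comm]
  have hEZ : Nat.card {x : BinaryTree Unit × List Bool // Econd i j x}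
      = Nat.card {z : (BinaryTree Unit × BinaryTree Unit) × Bool × List Bool // Zcond i j z} :=
    Nat.card_congr (mainEquiv i j)
  have h1 : (Nat.card {x : BinaryTree Unit × List Bool // Econd i j x} : ℚ)
      + (Nat.card {t : BinaryTree Unit // t ≠ BinaryTree.nil ∧
          nodesAtParity true t = i ∧ nodesAtParity false t = j} : ℚ)
      = (Nat.card {t : BinaryTree Unit // t ≠ BinaryTree.nil ∧
          nodesAtParity true t = i ∧ nodesAtParity false t = j} : ℚ) * ((i : ℚ) + j) := by
    exact_mod_cast hEA
  have h2 : (Nat.card {z : (BinaryTree Unit × BinaryTree Unit) × Bool × List Bool // Zcond i j z} : ℚ)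
      + (Nat.card {p : BinaryTree Unit × BinaryTree Unit //
          p.1 ≠ BinaryTree.nil ∧ p.2 ≠ BinaryTree.nil ∧
          nodesAtParity true p.1 + nodesAtParity false p.2 = i ∧
          nodesAtParity false p.1 + nodesAtParity true p.2 = j} : ℚ) * (j : ℚ)
      = (Nat.card {p : BinaryTree Unit × BinaryTree Unit //
          p.1 ≠ BinaryTree.nil ∧ p.2 ≠ BinaryTree.nil ∧
          nodesAtParity true p.1 + nodesAtParity false p.2 = i ∧
          nodesAtParity false p.1 + nodesAtParity true p.2 = j} : ℚ) * (2 * (i : ℚ) + 1) := by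
    exact_mod_cast hZP
  have h3 : (Nat.card {x : BinaryTree Unit × List Bool // Econd i j x} : ℚ)
      = (Nat.card {z : (BinaryTree Unit × BinaryTree Unit) × Bool × List Bool // Zcond i j z} : ℚ) := by
    exact_mod_cast hEZ
  linear_combination h1 - h2 - h3
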